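/- arXiv:2411.18874 — 4 statements merged into one kernel-verified Lean document; each statement's English description precedes it below -/
import Mathlib

section
/- For N = 60, the nonzero eigenvalue μ = 2·cos(4π/5) + 2·cos(π/3) of the discrete torus T^2_60 has multiplicity exactly 24; that is, the number of pairs (k_1,k_2) ∈ {0,1,…,59}^2 with 2·cos(2πk_1/60) + 2·cos(2πk_2/60) = 2·cos(4π/5) + 2·cos(π/3) equals 24. In particular, the uniform bound 24 on multiplicities of nonzero eigenvalues of T^2_N is optimal. -/
open Complex Polynomial

/-- The multiplicity of `μ` as an eigenvalue of the discrete torus `T^d_N`: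
the number of tuples `(k_1, …, k_d) ∈ {0, …, N-1}^d` with
`∑_j 2 cos(2π k_j / N) = μ`. -/
noncomputable def torusMult (N d : ℕ) (μ : ℝ) : ℕ :=
  Nat.card {k : Fin d → Fin N //
    (∑ j, 2 * Real.cos (2 * Real.pi * (k j : ℝ) / N)) = μ}

noncomputable def zeta : ℂ := Complex.exp (2 * Real.pi * Complex.I / (60 : ℕ))

lemma hzeta : IsPrimitiveRoot zeta 60 := Complex.isPrimitiveRoot_exp 60 (by norm_num)

lemma hz60 : zeta ^ 60 = 1 := hzeta.pow_eq_one

lemma h30 : zeta ^ 30 + 1 = 0 := by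
  have hne : zeta ^ 30 ≠ 1 := hzeta.pow_ne_one_of_pos_of_lt (by norm_num) (by norm_num)
  have h : (zeta ^ 30 - 1) * (zeta ^ 30 + 1) = 0 := by linear_combination hz60
  rcases mul_eq_zero.1 h with h | h
  · exact absurd (sub_eq_zero.1 h) hne
  · exact h

lemma h20 : zeta ^ 40 + zeta ^ 20 + 1 = 0 := by
  have hne : zeta ^ 20 ≠ 1 := hzeta.pow_ne_one_of_pos_of_lt (by norm_num) (by norm_num)
  have h : (zeta ^ 20 - 1) * (zeta ^ 40 + zeta ^ 20 + 1) = 0 := by linear_combination hz60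
  rcases mul_eq_zero.1 h with h | h
  · exact absurd (sub_eq_zero.1 h) hne
  · exact h

lemma h12 : zeta ^ 48 + zeta ^ 36 + zeta ^ 24 + zeta ^ 12 + 1 = 0 := by
  have hne : zeta ^ 12 ≠ 1 := hzeta.pow_ne_one_of_pos_of_lt (by norm_num) (by norm_num)
  have h : (zeta ^ 12 - 1) * (zeta ^ 48 + zeta ^ 36 + zeta ^ 24 + zeta ^ 12 + 1) = 0 := by
    linear_combination hz60
  rcases mul_eq_zero.1 h with h | h
  · exact absurd (sub_eq_zero.1 h) hne
  · exact h

lemma hphi : zeta ^ 16 = -zeta^14 + zeta^10 + zeta^8 + zeta^6 - zeta^2 - 1 := by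
  linear_combination (zeta^40+zeta^30+zeta^28+zeta^18+zeta^16-zeta^10) * h30
    + (-zeta^30-zeta^20-zeta^18-zeta^8-zeta^6+1) * h20 + zeta^2 * h12

lemma keyCos (k : ℕ) (hk : k ≤ 60) :
    ((2 * Real.cos (2 * Real.pi * k / 60) : ℝ) : ℂ) = zeta ^ k + zeta ^ (60 - k) := by
  have h1 : zeta ^ k = Complex.exp (((2 * Real.pi * k / 60 : ℝ) : ℂ) * Complex.I) := by
    rw [zeta, ← Complex.exp_nat_mul]; congr 1; push_cast; ring
  have h2 : zeta ^ (60 - k) =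
      Complex.exp (-(((2 * Real.pi * k / 60 : ℝ) : ℂ) * Complex.I)) := by
    rw [zeta, ← Complex.exp_nat_mul]
    rw [show ((60 - k : ℕ) : ℂ) * (2 * ↑Real.pi * Complex.I / ((60:ℕ):ℂ))
        = 2 * ↑Real.pi * Complex.I - ((2 * Real.pi * k / 60 : ℝ) : ℂ) * Complex.I by
      push_cast [Nat.cast_sub hk]; ring]
    rw [Complex.exp_sub, Complex.exp_two_pi_mul_I]
    rw [Complex.exp_neg]
    ring
  rw [h1, h2]
  push_cast
  rw [Complex.two_cos]
  ring_nf

lemma indep (c : Fin 16 → ℚ) (h : ∑ i : Fin 16, (c i : ℂ) * zeta ^ (i : ℕ) = 0) :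
    ∀ i, c i = 0 := by
  set p : ℚ[X] := ∑ i : Fin 16, Polynomial.C (c i) * X ^ (i : ℕ) with hp
  have hcoeff : ∀ j : Fin 16, p.coeff (j : ℕ) = c j := by
    intro j
    rw [hp, Polynomial.finset_sum_coeff]
    simp only [Polynomial.coeff_C_mul, Polynomial.coeff_X_pow]
    rw [Finset.sum_eq_single j]
    · simp
    · intro b _ hb
      have : (b : ℕ) ≠ (j : ℕ) := fun hh => hb (Fin.val_injective hh)
      simp [Ne.symm this]
    · simp
  have haev : Polynomial.aeval zeta p = 0 := by
    rw [hp]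
    simpa using h
  have hpz : p = 0 := by
    by_contra hne
    have hdvd : minpoly ℚ zeta ∣ p := minpoly.dvd ℚ zeta haev
    have hdeg : (minpoly ℚ zeta).natDegree ≤ p.natDegree :=
      Polynomial.natDegree_le_of_dvd hdvd hne
    have hmin : minpoly ℚ zeta = Polynomial.cyclotomic 60 ℚ :=
      (Polynomial.cyclotomic_eq_minpoly_rat hzeta (by norm_num)).symm
    have h16 : (minpoly ℚ zeta).natDegree = 16 := by
      rw [hmin, Polynomial.natDegree_cyclotomic]
      decide
    have hple : p.natDegree ≤ 15 := by
      refine Polynomial.natDegree_sum_le_of_forall_le _ _ ?_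
      intro i _
      refine le_trans (Polynomial.natDegree_C_mul_le _ _) ?_
      simpa using Nat.lt_succ_iff.mp (by exact_mod_cast i.2 : (i:ℕ) < 16)
    omega
  intro i
  rw [← hcoeff i, hpz]
  simp

lemma vec_iff (c d : Fin 16 → ℤ) :
    (∑ i : Fin 16, (c i : ℂ) * zeta ^ (i : ℕ)) = (∑ i : Fin 16, (d i : ℂ) * zeta ^ (i : ℕ))
      ↔ ∀ i, c i = d i := by
  constructor
  · intro h
    have h2 : ∑ i : Fin 16, (((c i - d i : ℤ) : ℚ) : ℂ) * zeta ^ (i : ℕ) = 0 := by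
      push_cast
      simpa [sub_mul, Finset.sum_sub_distrib, sub_eq_zero] using h
    have := indep (fun i => ((c i - d i : ℤ) : ℚ)) h2
    intro i
    have hi := this i
    have : ((c i - d i : ℤ) : ℚ) = 0 := hi
    exact_mod_cast sub_eq_zero.mp (by exact_mod_cast this)
  · intro h
    exact Finset.sum_congr rfl fun i _ => by rw [h i]

section sums
variable {M : Type*} [AddCommMonoid M]
lemma sum_univ_9 (f : Fin 9 → M) : ∑ i, f i = f 0 + f 1 + f 2 + f 3 + f 4 + f 5 + f 6 + f 7 + f 8 := by
  rw [Fin.sum_univ_castSucc, Fin.sum_univ_eight]; rfl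
lemma sum_univ_10 (f : Fin 10 → M) : ∑ i, f i = f 0 + f 1 + f 2 + f 3 + f 4 + f 5 + f 6 + f 7 + f 8 + f 9 := by
  rw [Fin.sum_univ_castSucc, sum_univ_9]; rfl
lemma sum_univ_11 (f : Fin 11 → M) : ∑ i, f i = f 0 + f 1 + f 2 + f 3 + f 4 + f 5 + f 6 + f 7 + f 8 + f 9 + f 10 := by
  rw [Fin.sum_univ_castSucc, sum_univ_10]; rfl
lemma sum_univ_12 (f : Fin 12 → M) : ∑ i, f i = f 0 + f 1 + f 2 + f 3 + f 4 + f 5 + f 6 + f 7 + f 8 + f 9 + f 10 + f 11 := by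
  rw [Fin.sum_univ_castSucc, sum_univ_11]; rfl
lemma sum_univ_13 (f : Fin 13 → M) : ∑ i, f i = f 0 + f 1 + f 2 + f 3 + f 4 + f 5 + f 6 + f 7 + f 8 + f 9 + f 10 + f 11 + f 12 := by
  rw [Fin.sum_univ_castSucc, sum_univ_12]; rfl
lemma sum_univ_14 (f : Fin 14 → M) : ∑ i, f i = f 0 + f 1 + f 2 + f 3 + f 4 + f 5 + f 6 + f 7 + f 8 + f 9 + f 10 + f 11 + f 12 + f 13 := by
  rw [Fin.sum_univ_castSucc, sum_univ_13]; rfl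
lemma sum_univ_15 (f : Fin 15 → M) : ∑ i, f i = f 0 + f 1 + f 2 + f 3 + f 4 + f 5 + f 6 + f 7 + f 8 + f 9 + f 10 + f 11 + f 12 + f 13 + f 14 := by
  rw [Fin.sum_univ_castSucc, sum_univ_14]; rfl
lemma sum_univ_16 (f : Fin 16 → M) : ∑ i, f i = f 0 + f 1 + f 2 + f 3 + f 4 + f 5 + f 6 + f 7 + f 8 + f 9 + f 10 + f 11 + f 12 + f 13 + f 14 + f 15 := by
  rw [Fin.sum_univ_castSucc, sum_univ_15]; rfl
end sums

def step (v : Fin 16 → ℤ) : Fin 16 → ℤ := fun i =>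
  match (i : ℕ) with
  | 0 => -v 15
  | 1 => v 0
  | 2 => v 1 - v 15
  | 3 => v 2
  | 4 => v 3
  | 5 => v 4
  | 6 => v 5 + v 15
  | 7 => v 6
  | 8 => v 7 + v 15
  | 9 => v 8
  | 10 => v 9 + v 15
  | 11 => v 10
  | 12 => v 11
  | 13 => v 12
  | 14 => v 13 - v 15
  | _ => v 14

def Vrow : ℕ → Fin 16 → ℤ
  | 0 => fun i => match (i : ℕ) with
    | 0 => 1
    | _ => 0
  | m+1 => step (Vrow m)

lemma stepEval0 (v : Fin 16 → ℤ) : step v 0 = -v 15 := rfl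
lemma stepEval1 (v : Fin 16 → ℤ) : step v 1 = v 0 := rfl
lemma stepEval2 (v : Fin 16 → ℤ) : step v 2 = v 1 - v 15 := rfl
lemma stepEval3 (v : Fin 16 → ℤ) : step v 3 = v 2 := rfl
lemma stepEval4 (v : Fin 16 → ℤ) : step v 4 = v 3 := rfl
lemma stepEval5 (v : Fin 16 → ℤ) : step v 5 = v 4 := rfl
lemma stepEval6 (v : Fin 16 → ℤ) : step v 6 = v 5 + v 15 := rfl
lemma stepEval7 (v : Fin 16 → ℤ) : step v 7 = v 6 := rfl
lemma stepEval8 (v : Fin 16 → ℤ) : step v 8 = v 7 + v 15 := rfl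
lemma stepEval9 (v : Fin 16 → ℤ) : step v 9 = v 8 := rfl
lemma stepEval10 (v : Fin 16 → ℤ) : step v 10 = v 9 + v 15 := rfl
lemma stepEval11 (v : Fin 16 → ℤ) : step v 11 = v 10 := rfl
lemma stepEval12 (v : Fin 16 → ℤ) : step v 12 = v 11 := rfl
lemma stepEval13 (v : Fin 16 → ℤ) : step v 13 = v 12 := rfl
lemma stepEval14 (v : Fin 16 → ℤ) : step v 14 = v 13 - v 15 := rfl
lemma stepEval15 (v : Fin 16 → ℤ) : step v 15 = v 14 := rfl
lemma vrowEval0 : Vrow 0 (0 : Fin 16) = 1 := rfl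
lemma vrowEval1 : Vrow 0 (1 : Fin 16) = 0 := rfl
lemma vrowEval2 : Vrow 0 (2 : Fin 16) = 0 := rfl
lemma vrowEval3 : Vrow 0 (3 : Fin 16) = 0 := rfl
lemma vrowEval4 : Vrow 0 (4 : Fin 16) = 0 := rfl
lemma vrowEval5 : Vrow 0 (5 : Fin 16) = 0 := rfl
lemma vrowEval6 : Vrow 0 (6 : Fin 16) = 0 := rfl
lemma vrowEval7 : Vrow 0 (7 : Fin 16) = 0 := rfl
lemma vrowEval8 : Vrow 0 (8 : Fin 16) = 0 := rfl
lemma vrowEval9 : Vrow 0 (9 : Fin 16) = 0 := rfl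
lemma vrowEval10 : Vrow 0 (10 : Fin 16) = 0 := rfl
lemma vrowEval11 : Vrow 0 (11 : Fin 16) = 0 := rfl
lemma vrowEval12 : Vrow 0 (12 : Fin 16) = 0 := rfl
lemma vrowEval13 : Vrow 0 (13 : Fin 16) = 0 := rfl
lemma vrowEval14 : Vrow 0 (14 : Fin 16) = 0 := rfl
lemma vrowEval15 : Vrow 0 (15 : Fin 16) = 0 := rfl
lemma finval0 : ((0 : Fin 16) : ℕ) = 0 := rfl
lemma finval1 : ((1 : Fin 16) : ℕ) = 1 := rfl
lemma finval2 : ((2 : Fin 16) : ℕ) = 2 := rfl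
lemma finval3 : ((3 : Fin 16) : ℕ) = 3 := rfl
lemma finval4 : ((4 : Fin 16) : ℕ) = 4 := rfl
lemma finval5 : ((5 : Fin 16) : ℕ) = 5 := rfl
lemma finval6 : ((6 : Fin 16) : ℕ) = 6 := rfl
lemma finval7 : ((7 : Fin 16) : ℕ) = 7 := rfl
lemma finval8 : ((8 : Fin 16) : ℕ) = 8 := rfl
lemma finval9 : ((9 : Fin 16) : ℕ) = 9 := rfl
lemma finval10 : ((10 : Fin 16) : ℕ) = 10 := rfl
lemma finval11 : ((11 : Fin 16) : ℕ) = 11 := rfl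
lemma finval12 : ((12 : Fin 16) : ℕ) = 12 := rfl
lemma finval13 : ((13 : Fin 16) : ℕ) = 13 := rfl
lemma finval14 : ((14 : Fin 16) : ℕ) = 14 := rfl
lemma finval15 : ((15 : Fin 16) : ℕ) = 15 := rfl

lemma step_mul (v : Fin 16 → ℤ) :
    zeta * (∑ i : Fin 16, (v i : ℂ) * zeta ^ (i : ℕ))
      = ∑ i : Fin 16, (step v i : ℂ) * zeta ^ (i : ℕ) := by
  simp only [sum_univ_16, stepEval0, stepEval1, stepEval2, stepEval3, stepEval4, stepEval5, stepEval6, stepEval7, stepEval8, stepEval9, stepEval10, stepEval11, stepEval12, stepEval13, stepEval14, stepEval15, finval0, finval1, finval2, finval3, finval4, finval5, finval6, finval7, finval8, finval9, finval10, finval11, finval12, finval13, finval14, finval15]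
  push_cast
  linear_combination ((v 15 : ℤ) : ℂ) * hphi

lemma pv : ∀ m : ℕ, zeta ^ m = ∑ i : Fin 16, (Vrow m i : ℂ) * zeta ^ (i : ℕ) := by
  intro m
  induction m with
  | zero =>
    simp only [sum_univ_16, vrowEval0, vrowEval1, vrowEval2, vrowEval3, vrowEval4, vrowEval5, vrowEval6, vrowEval7, vrowEval8, vrowEval9, vrowEval10, vrowEval11, vrowEval12, vrowEval13, vrowEval14, vrowEval15, finval0, finval1, finval2, finval3, finval4, finval5, finval6, finval7, finval8, finval9, finval10, finval11, finval12, finval13, finval14, finval15]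
    norm_num
  | succ m ih =>
    rw [pow_succ, mul_comm, show Vrow (m+1) = step (Vrow m) from rfl, ← step_mul, ← ih]

def Wtab : Fin 60 → Fin 16 → ℤ := fun a i =>
  (([[2,0,0,0,0,0,0,0,0,0,0,0,0,0,0,0],
   [0,0,0,0,0,1,0,1,0,1,0,0,0,-1,0,-1],
   [-1,0,1,0,1,0,1,0,1,0,0,0,-1,0,-1,0],
   [0,1,0,2,0,0,0,0,0,-1,0,-1,0,0,0,1],
   [1,0,1,0,1,0,0,0,-1,0,-1,0,0,0,1,0],
   [0,0,0,0,0,2,0,0,0,0,0,0,0,0,0,-1],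
   [0,0,0,0,1,0,1,0,0,0,0,0,0,0,-1,0],
   [0,0,0,1,0,0,0,1,0,0,0,0,0,-1,0,0],
   [0,0,1,0,0,0,0,0,1,0,0,0,-1,0,0,0],
   [0,1,0,0,0,0,0,0,0,1,0,-1,0,0,0,0],
   [1,0,0,0,0,0,0,0,0,0,0,0,0,0,0,0],
   [0,-1,0,0,0,1,0,1,0,0,0,1,0,-1,0,-1],
   [-1,0,0,0,1,0,1,0,0,0,0,0,0,0,-1,0],
   [0,1,0,1,0,0,0,-1,0,-1,0,-1,0,1,0,1],
   [1,0,1,0,0,0,-1,0,-1,0,-1,0,0,0,2,0],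
   [0,0,0,0,0,0,0,0,0,0,0,0,0,0,0,0],
   [-1,0,-1,0,0,0,1,0,1,0,1,0,0,0,-2,0],
   [0,-1,0,-1,0,0,0,1,0,1,0,1,0,-1,0,-1],
   [1,0,0,0,-1,0,-1,0,0,0,0,0,0,0,1,0],
   [0,1,0,0,0,-1,0,-1,0,0,0,-1,0,1,0,1],
   [-1,0,0,0,0,0,0,0,0,0,0,0,0,0,0,0],
   [0,-1,0,0,0,0,0,0,0,-1,0,1,0,0,0,0],
   [0,0,-1,0,0,0,0,0,-1,0,0,0,1,0,0,0],
   [0,0,0,-1,0,0,0,-1,0,0,0,0,0,1,0,0],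
   [0,0,0,0,-1,0,-1,0,0,0,0,0,0,0,1,0],
   [0,0,0,0,0,-2,0,0,0,0,0,0,0,0,0,1],
   [-1,0,-1,0,-1,0,0,0,1,0,1,0,0,0,-1,0],
   [0,-1,0,-2,0,0,0,0,0,1,0,1,0,0,0,-1],
   [1,0,-1,0,-1,0,-1,0,-1,0,0,0,1,0,1,0],
   [0,0,0,0,0,-1,0,-1,0,-1,0,0,0,1,0,1],
   [-2,0,0,0,0,0,0,0,0,0,0,0,0,0,0,0],
   [0,0,0,0,0,-1,0,-1,0,-1,0,0,0,1,0,1],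
   [1,0,-1,0,-1,0,-1,0,-1,0,0,0,1,0,1,0],
   [0,-1,0,-2,0,0,0,0,0,1,0,1,0,0,0,-1],
   [-1,0,-1,0,-1,0,0,0,1,0,1,0,0,0,-1,0],
   [0,0,0,0,0,-2,0,0,0,0,0,0,0,0,0,1],
   [0,0,0,0,-1,0,-1,0,0,0,0,0,0,0,1,0],
   [0,0,0,-1,0,0,0,-1,0,0,0,0,0,1,0,0],
   [0,0,-1,0,0,0,0,0,-1,0,0,0,1,0,0,0],
   [0,-1,0,0,0,0,0,0,0,-1,0,1,0,0,0,0],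
   [-1,0,0,0,0,0,0,0,0,0,0,0,0,0,0,0],
   [0,1,0,0,0,-1,0,-1,0,0,0,-1,0,1,0,1],
   [1,0,0,0,-1,0,-1,0,0,0,0,0,0,0,1,0],
   [0,-1,0,-1,0,0,0,1,0,1,0,1,0,-1,0,-1],
   [-1,0,-1,0,0,0,1,0,1,0,1,0,0,0,-2,0],
   [0,0,0,0,0,0,0,0,0,0,0,0,0,0,0,0],
   [1,0,1,0,0,0,-1,0,-1,0,-1,0,0,0,2,0],
   [0,1,0,1,0,0,0,-1,0,-1,0,-1,0,1,0,1],
   [-1,0,0,0,1,0,1,0,0,0,0,0,0,0,-1,0],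
   [0,-1,0,0,0,1,0,1,0,0,0,1,0,-1,0,-1],
   [1,0,0,0,0,0,0,0,0,0,0,0,0,0,0,0],
   [0,1,0,0,0,0,0,0,0,1,0,-1,0,0,0,0],
   [0,0,1,0,0,0,0,0,1,0,0,0,-1,0,0,0],
   [0,0,0,1,0,0,0,1,0,0,0,0,0,-1,0,0],
   [0,0,0,0,1,0,1,0,0,0,0,0,0,0,-1,0],
   [0,0,0,0,0,2,0,0,0,0,0,0,0,0,0,-1],
   [1,0,1,0,1,0,0,0,-1,0,-1,0,0,0,1,0],
   [0,1,0,2,0,0,0,0,0,-1,0,-1,0,0,0,1],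
   [-1,0,1,0,1,0,1,0,1,0,0,0,-1,0,-1,0],
   [0,0,0,0,0,1,0,1,0,1,0,0,0,-1,0,-1]] : List (List ℤ)).getD a.1 []).getD i.1 0

set_option maxRecDepth 100000 in
lemma tablesEq : ∀ k : Fin 60, ∀ i : Fin 16, Vrow k.1 i + Vrow (60 - k.1) i = Wtab k i := by
  decide

lemma red (k : Fin 60) :
    zeta ^ (k : ℕ) + zeta ^ (60 - (k : ℕ)) = ∑ i : Fin 16, (Wtab k i : ℂ) * zeta ^ (i : ℕ) := by
  rw [pv (k : ℕ), pv (60 - (k : ℕ)), ← Finset.sum_add_distrib]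
  exact Finset.sum_congr rfl fun i _ => by rw [← tablesEq k i]; push_cast; ring

lemma vec_iff2 (c c' d d' : Fin 16 → ℤ) :
    (∑ i : Fin 16, (c i : ℂ) * zeta ^ (i:ℕ)) + (∑ i : Fin 16, (c' i : ℂ) * zeta ^ (i:ℕ))
      = (∑ i : Fin 16, (d i : ℂ) * zeta ^ (i:ℕ)) + (∑ i : Fin 16, (d' i : ℂ) * zeta ^ (i:ℕ))
      ↔ ∀ i, c i + c' i = d i + d' i := by
  rw [← Finset.sum_add_distrib, ← Finset.sum_add_distrib]
  have h1 : ∑ i : Fin 16, ((c i : ℂ) * zeta ^ (i:ℕ) + (c' i : ℂ) * zeta ^ (i:ℕ))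
      = ∑ i : Fin 16, (((fun i => c i + c' i) i : ℤ) : ℂ) * zeta ^ (i:ℕ) :=
    Finset.sum_congr rfl fun i _ => by push_cast; ring
  have h2 : ∑ i : Fin 16, ((d i : ℂ) * zeta ^ (i:ℕ) + (d' i : ℂ) * zeta ^ (i:ℕ))
      = ∑ i : Fin 16, (((fun i => d i + d' i) i : ℤ) : ℂ) * zeta ^ (i:ℕ) :=
    Finset.sum_congr rfl fun i _ => by push_cast; ring
  rw [h1, h2, vec_iff]

lemma keyIff (a b : Fin 60) :
    2 * Real.cos (2 * Real.pi * ((a : ℕ) : ℝ) / 60) + 2 * Real.cos (2 * Real.pi * ((b : ℕ) : ℝ) / 60)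
      = 2 * Real.cos (4 * Real.pi / 5) + 2 * Real.cos (Real.pi / 3)
    ↔ ∀ i : Fin 16, Wtab a i + Wtab b i = Wtab 24 i + Wtab 10 i := by
  have r24 := red (24 : Fin 60)
  rw [show ((24 : Fin 60) : ℕ) = 24 from rfl] at r24
  have r10 := red (10 : Fin 60)
  rw [show ((10 : Fin 60) : ℕ) = 10 from rfl] at r10
  rw [show (4 * Real.pi / 5) = 2 * Real.pi * ((24:ℕ):ℝ) / 60 by push_cast; ring,
      show (Real.pi / 3) = 2 * Real.pi * ((10:ℕ):ℝ) / 60 by push_cast; ring]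
  rw [← Complex.ofReal_inj]
  rw [Complex.ofReal_add, Complex.ofReal_add]
  rw [keyCos (a:ℕ) a.2.le, keyCos (b:ℕ) b.2.le, keyCos 24 (by norm_num), keyCos 10 (by norm_num)]
  rw [r24, r10, red a, red b]
  exact vec_iff2 _ _ _ _

set_option maxRecDepth 100000 in
theorem mult_24_attained_for_N_60 :
    2 * Real.cos (4 * Real.pi / 5) + 2 * Real.cos (Real.pi / 3) ≠ 0 ∧
    torusMult 60 2 (2 * Real.cos (4 * Real.pi / 5) + 2 * Real.cos (Real.pi / 3)) = 24 := by
  constructor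
  · have hq := Real.quadratic_root_cos_pi_div_five
    have h45 : Real.cos (4 * Real.pi / 5) = -Real.cos (Real.pi / 5) := by
      rw [show (4*Real.pi/5) = Real.pi - Real.pi/5 by ring, Real.cos_pi_sub]
    rw [h45, Real.cos_pi_div_three]
    intro h
    have hc : Real.cos (Real.pi / 5) = 1/2 := by linarith
    rw [hc] at hq
    norm_num at hq
  · rw [torusMult]
    rw [Nat.card_congr (Equiv.subtypeEquivRight
      (q := fun k : Fin 2 → Fin 60 => ∀ i : Fin 16,
        Wtab (k 0) i + Wtab (k 1) i = Wtab 24 i + Wtab 10 i)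
      (fun k => by
        rw [Fin.sum_univ_two]
        simp only [Nat.cast_ofNat]
        exact keyIff (k 0) (k 1)))]
    rw [Nat.card_eq_fintype_card]
    decide
end

section
/- Let d ≥ 1 and let N ≥ 4 be an even integer. If d is even, then 0 is an eigenvalue of the discrete torus T^d_N. Moreover, if d is odd and there exists an odd prime p dividing N with p ≤ d, then 0 is an eigenvalue of T^d_N. -/
/-!
Eigenvalues of tori add under concatenation of the index tuples, because the eigenvalue is a sum
over the coordinates. For even `N` the pair `(0, N/2)` gives `2 cos 0 + 2 cos π = 0` in dimension
two, and for a divisor `p ≥ 2` of `N` the tuple `(0, N/p, 2N/p, …)` gives twice the real part of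
the sum of the `p`-th roots of unity, again `0`. Padding `p` (or `0`) with pairs covers every
dimension of the same parity.
-/

open Real

theorem sum_range_cos_two_pi_mul_div {n : ℕ} (hn : 2 ≤ n) :
    ∑ i ∈ Finset.range n, cos (2 * π * i / n) = 0 := by
  have hζ : IsPrimitiveRoot (Complex.exp (2 * π * Complex.I / n)) n :=
    Complex.isPrimitiveRoot_exp n (by omega)
  have hre (i : ℕ) : (Complex.exp (2 * π * Complex.I / n) ^ i).re = cos (2 * π * i / n) := by
    rw [← Complex.exp_nat_mul, show (i : ℂ) * (2 * π * Complex.I / n) =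
      ((2 * π * i / n : ℝ) : ℂ) * Complex.I by push_cast; ring, Complex.exp_ofReal_mul_I_re]
  simp_rw [← hre, ← Complex.re_sum, hζ.geom_sum_eq_zero (by omega), Complex.zero_re]

def IsTorusEigenvalue (N d : ℕ) (μ : ℝ) : Prop :=
  ∃ k : Fin d → Fin N, ∑ j, 2 * cos (2 * π * (k j : ℝ) / N) = μ

namespace IsTorusEigenvalue

variable {N d e : ℕ} {μ ν : ℝ}

theorem one_le_torusMult (h : IsTorusEigenvalue N d μ) : 1 ≤ torusMult N d μ := by
  obtain ⟨k, hk⟩ := h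
  have : Nonempty {k : Fin d → Fin N // ∑ j, 2 * cos (2 * π * (k j : ℝ) / N) = μ} := ⟨⟨k, hk⟩⟩
  exact Nat.card_pos

theorem zero_dim (N : ℕ) : IsTorusEigenvalue N 0 0 := ⟨Fin.elim0, by simp⟩

theorem add (h₁ : IsTorusEigenvalue N d μ) (h₂ : IsTorusEigenvalue N e ν) :
    IsTorusEigenvalue N (d + e) (μ + ν) := by
  obtain ⟨k₁, rfl⟩ := h₁
  obtain ⟨k₂, rfl⟩ := h₂
  exact ⟨Fin.append k₁ k₂, by simp [Fin.sum_univ_add]⟩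

theorem zero_two_dim (hN : 0 < N) (hNe : Even N) : IsTorusEigenvalue N 2 0 := by
  obtain ⟨m, rfl⟩ := hNe
  refine ⟨![⟨0, hN⟩, ⟨m, by omega⟩], ?_⟩
  have hm : (m : ℝ) ≠ 0 := by norm_cast; omega
  have hπ : 2 * π * m / (m + m) = π := by field_simp; ring
  simp [Fin.sum_univ_two, hπ]

theorem zero_of_dvd {p : ℕ} (hp : 2 ≤ p) (hpN : p ∣ N) (hN : 0 < N) :
    IsTorusEigenvalue N p 0 := by
  obtain ⟨q, rfl⟩ := hpN
  have hq : 0 < q := Nat.pos_of_mul_pos_left hN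
  refine ⟨fun j => ⟨q * j, by rw [mul_comm p]; exact Nat.mul_lt_mul_of_pos_left j.isLt hq⟩, ?_⟩
  have hcos (j : ℕ) : 2 * cos (2 * π * ((q * j : ℕ) : ℝ) / ((p * q : ℕ) : ℝ)) =
      2 * cos (2 * π * j / p) := by
    have : (q : ℝ) ≠ 0 := by positivity
    push_cast; congr 2; field_simp
  simp only [hcos]
  rw [Fin.sum_univ_eq_sum_range (fun j => 2 * cos (2 * π * j / p)), ← Finset.mul_sum,
    sum_range_cos_two_pi_mul_div hp, mul_zero]

theorem add_two_mul (hN : 0 < N) (hNe : Even N) (h : IsTorusEigenvalue N d μ) (m : ℕ) :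
    IsTorusEigenvalue N (d + 2 * m) μ := by
  induction m with
  | zero => exact h
  | succ m ih =>
    rw [mul_add, mul_one, ← add_assoc]
    simpa using ih.add (zero_two_dim hN hNe)

end IsTorusEigenvalue

open IsTorusEigenvalue in
theorem zero_eigenvalue_even_N_general (N d : ℕ) (hN : 4 ≤ N) (hNe : Even N) :
    (Even d → 1 ≤ torusMult N d 0) ∧
    (Odd d → (∃ p : ℕ, p.Prime ∧ Odd p ∧ p ∣ N ∧ p ≤ d) → 1 ≤ torusMult N d 0) := by
  have hN₀ : 0 < N := by omega
  constructor
  · rintro ⟨m, rfl⟩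
    simpa [two_mul] using ((zero_dim N).add_two_mul hN₀ hNe m).one_le_torusMult
  · rintro hd ⟨p, hp, hpo, hpN, hpd⟩
    obtain ⟨m, hm⟩ := Nat.Odd.sub_odd hd hpo
    have hd' : d = p + 2 * m := by omega
    subst hd'
    exact ((zero_of_dvd hp.two_le hpN hN₀).add_two_mul hN₀ hNe m).one_le_torusMult

theorem zero_eigenvalue_even_N (N d : ℕ) (hd : 1 ≤ d) (hN : 4 ≤ N) (hNe : Even N) :
    (Even d → 1 ≤ torusMult N d 0) ∧
    (Odd d → (∃ p : ℕ, p.Prime ∧ Odd p ∧ p ∣ N ∧ p ≤ d) → 1 ≤ torusMult N d 0) :=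
  zero_eigenvalue_even_N_general N d hN hNe
end

section
/- Let ζ ∈ ℂ be a root of unity and let ℓ ≥ 1 be an integer. Then the collection of multisets M of complex roots of unity such that M has cardinality ℓ, ζ is an element of M, the sum of the elements of M (with multiplicity) equals 0, and no nonempty proper submultiset of M has element-sum 0 (i.e. M is a minimal vanishing sum of roots of unity of length ℓ containing ζ), is finite of cardinality at most ℓ^{3ℓ²}. -/
/-!
Mann's descent. Dividing by `ζ` we may assume that `1 ∈ M` and that `M` consists of `n`-th roots
of unity. If `n = p * k` with `p` prime and either `p ∣ k` or `p > |M|`, every element of `M` is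
`x ^ c * v` with `c < p` and `v ^ k = 1`, where `x` is a primitive `pk`-th root of unity if
`p ∣ k` and a primitive `p`-th root of unity otherwise. Over `K = ℚ(μ_k)` the element `x` has
degree `p`, resp. `p - 1` with the single relation `1 + x + ⋯ + x ^ (p - 1) = 0`. Grouping `M` by
`c`, the class sums are therefore `0`, resp. `x ^ c` times a common value, which is `0` as well
because `|M| < p` leaves some class empty. By minimality `M` is the class of `1`, so `M ⊆ μ_k`.
Such a `p` exists unless `n` divides the primorial `ℓ#`; descending, `M ⊆ μ_{ℓ#}`, and
`ℓ# ≤ ℓ ^ ℓ` leaves at most `ℓ ^ (ℓ * ℓ)` multisets of size `ℓ`.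
-/

/-- The collection of minimal vanishing sums of roots of unity of length `ℓ`
containing `ζ`: multisets of `ℓ` roots of unity containing `ζ`, summing to `0`,
with no nonempty proper submultiset summing to `0`. -/
def minimalVanishingSums (ζ : ℂ) (ℓ : ℕ) : Set (Multiset ℂ) :=
  {M | Multiset.card M = ℓ ∧ ζ ∈ M ∧
    (∀ z ∈ M, ∃ n : ℕ, 0 < n ∧ z ^ n = 1) ∧ M.sum = 0 ∧
    ∀ T : Multiset ℂ, T ≤ M → T ≠ 0 → T ≠ M → T.sum ≠ 0}

open Polynomial IntermediateField Module

theorem Multiset.sum_fiberwise_of_maps_to {ι κ : Type*} [AddCommMonoid ι] [DecidableEq κ]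
    {W : Multiset ι} {t : Finset κ} {g : ι → κ} (h : ∀ w ∈ W, g w ∈ t) :
    ∑ c ∈ t, (W.filter (g · = c)).sum = W.sum := by
  induction W using Multiset.induction with
  | empty => simp
  | cons a W ih =>
    simp only [filter_cons, sum_add, Finset.sum_add_distrib, sum_cons]
    rw [ih fun w hw => h w (mem_cons_of_mem hw)]
    congr 1
    simp only [apply_ite Multiset.sum, sum_singleton, sum_zero]
    rw [Finset.sum_ite_eq, if_pos (h a (mem_cons_self a W))]

theorem Multiset.exists_pow_eq_one {G : Type*} [Monoid G] {M : Multiset G}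
    (h : ∀ z ∈ M, IsOfFinOrder z) : ∃ n, 0 < n ∧ ∀ z ∈ M, z ^ n = 1 := by
  refine ⟨(M.map orderOf).prod, prod_pos fun n hn => ?_, fun z hz => ?_⟩
  · obtain ⟨z, hz, rfl⟩ := mem_map.1 hn
    exact (h z hz).orderOf_pos
  · exact orderOf_dvd_iff_pow_eq_one.1 (dvd_prod (mem_map_of_mem _ hz))

theorem Nat.exists_prime_mul_of_not_dvd_primorial {n L : ℕ} (h : ¬ n ∣ primorial L) :
    ∃ p k, p.Prime ∧ n = p * k ∧ (p ∣ k ∨ L < p) := by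
  by_contra! H
  apply h
  have hsq : Squarefree n := squarefree_iff_prime_squarefree.2 fun p hp ⟨k, hk⟩ =>
    (H p (p * k) hp (by rw [hk, mul_assoc])).1 (dvd_mul_right p k)
  rw [← prod_primeFactors_of_squarefree hsq, primorial_eq_prod_primesLE]
  refine Finset.prod_dvd_prod_of_subset _ _ _ fun p hp => ?_
  have hp' := prime_of_mem_primeFactors hp
  refine mem_primesLE.2 ⟨(H p (n / p) hp' ?_).2, hp'⟩
  exact (Nat.mul_div_cancel' (dvd_of_mem_primeFactors hp)).symm

theorem primorial_le_pow_self (n : ℕ) : primorial n ≤ n ^ n := by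
  rcases n.eq_zero_or_pos with rfl | hn
  · simp
  calc primorial n ≤ n ^ (Nat.primesLE n).card :=
        Finset.prod_le_pow_card _ _ _ fun p hp => Nat.le_of_mem_primesLE hp
    _ ≤ n ^ n := by
        refine Nat.pow_le_pow_right hn ?_
        rw [Nat.primesLE_eq_filter_Icc_one]
        exact (Finset.card_filter_le _ _).trans (by simp)

theorem Finset.finite_setOf_multiset_card_eq {α : Type*} [DecidableEq α] (T : Finset α)
    (ℓ : ℕ) : {M : Multiset α | Multiset.card M = ℓ ∧ ∀ z ∈ M, z ∈ T}.Finite ∧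
      {M : Multiset α | Multiset.card M = ℓ ∧ ∀ z ∈ M, z ∈ T}.ncard ≤ T.card ^ ℓ := by
  set U := (Fintype.piFinset fun _ : Fin ℓ => T).image fun f => (List.ofFn f : Multiset α)
  have hsub : {M : Multiset α | Multiset.card M = ℓ ∧ ∀ z ∈ M, z ∈ T} ⊆ U := by
    rintro M ⟨hcard, hT⟩
    have hl : M.toList.length = ℓ := by rw [Multiset.length_toList, hcard]
    refine mem_coe.2 (mem_image.2 ⟨fun i => M.toList[i.1]'(hl ▸ i.2),
      Fintype.mem_piFinset.2 fun i => hT _ (Multiset.mem_toList.1 (List.getElem_mem _)), ?_⟩)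
    conv_rhs => rw [← M.coe_toList]
    exact congrArg _ (List.ext_getElem (by simp [hl]) fun i _ _ => by simp)
  refine ⟨U.finite_toSet.subset hsub, (Set.ncard_le_ncard hsub U.finite_toSet).trans ?_⟩
  rw [Set.ncard_coe_finset]
  exact card_image_le.trans (Fintype.card_piFinset_const T ℓ).le

theorem IntermediateField.mem_adjoin_pow_pow {F L : Type*} [Field F] [Field L] [Algebra F L]
    {z : L} (hz : z ≠ 0) {s t : ℕ} (h : s.Coprime t) : z ∈ adjoin F {z ^ s, z ^ t} := by
  have hbezout : z = (z ^ s) ^ s.gcdA t * (z ^ t) ^ s.gcdB t := by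
    rw [← zpow_natCast, ← zpow_natCast, ← zpow_mul, ← zpow_mul, ← zpow_add₀ hz,
      ← Nat.gcd_eq_gcd_ab, h.gcd_eq_one, Nat.cast_one, zpow_one]
  have hs : z ^ s ∈ adjoin F {z ^ s, z ^ t} := subset_adjoin F _ (Set.mem_insert _ _)
  have ht : z ^ t ∈ adjoin F {z ^ s, z ^ t} := subset_adjoin F _ (Set.mem_insert_of_mem _ rfl)
  have := mul_mem (zpow_mem hs (s.gcdA t)) (zpow_mem ht (s.gcdB t))
  rwa [← hbezout] at this

theorem IntermediateField.eq_zero_of_sum_mul_pow_eq_zero {F L : Type*} [Field F] [Field L]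
    [Algebra F L] {K : IntermediateField F L} {x : L} {S : ℕ → L} (hS : ∀ i, S i ∈ K)
    (h : ∑ i ∈ Finset.range (minpoly K x).natDegree, S i * x ^ i = 0) :
    ∀ i < (minpoly K x).natDegree, S i = 0 := by
  intro i hi
  have := Fintype.linearIndependent_iff.1 (linearIndependent_pow (K := K) x)
    (fun j => ⟨S j, hS j⟩) (by rw [← h, Finset.sum_range]; rfl) ⟨i, hi⟩
  exact congrArg Subtype.val this

theorem IntermediateField.eq_of_sum_mul_pow_eq_zero {F L : Type*} [Field F] [Field L]
    [Algebra F L] {K : IntermediateField F L} {x : L} {p : ℕ} (hx : IsPrimitiveRoot x p)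
    (hp : 1 < p) (hdeg : (minpoly K x).natDegree = p - 1) {S : ℕ → L} (hS : ∀ i, S i ∈ K)
    (h : ∑ i ∈ Finset.range p, S i * x ^ i = 0) : ∀ i < p, S i = S (p - 1) := by
  have hdiff : ∑ i ∈ Finset.range (minpoly K x).natDegree, (S i - S (p - 1)) * x ^ i = 0 := by
    have hfull : ∑ i ∈ Finset.range p, (S i - S (p - 1)) * x ^ i = 0 := by
      simp only [sub_mul, Finset.sum_sub_distrib, ← Finset.mul_sum, h, hx.geom_sum_eq_zero hp,
        mul_zero, sub_zero]
    rw [show p = p - 1 + 1 by omega, Finset.sum_range_succ, Nat.add_sub_cancel, sub_self,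
      zero_mul, add_zero] at hfull
    rwa [hdeg]
  intro i hi
  rcases Nat.lt_or_ge i (p - 1) with hi' | hi'
  · exact sub_eq_zero.1
      (eq_zero_of_sum_mul_pow_eq_zero (fun j => sub_mem (hS j) (hS _)) hdiff i (hdeg ▸ hi'))
  · rw [show i = p - 1 by omega]

namespace IsPrimitiveRoot

theorem mem_adjoin_of_pow_eq_one {F L : Type*} [Field F] [Field L] [Algebra F L] {ε x : L}
    {k : ℕ} (hε : IsPrimitiveRoot ε k) (hk : 0 < k) (hx : x ^ k = 1) : x ∈ F⟮ε⟯ := by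
  have : NeZero k := ⟨hk.ne'⟩
  obtain ⟨i, -, rfl⟩ := hε.eq_pow_of_pow_eq_one hx
  exact pow_mem (mem_adjoin_simple_self F ε) i

variable {L : Type*} [Field L] [CharZero L]

theorem finrank_rat_adjoin {μ : L} {k : ℕ} (hμ : IsPrimitiveRoot μ k) (hk : 0 < k) :
    finrank ℚ ℚ⟮μ⟯ = k.totient := by
  rw [adjoin.finrank (hμ.isIntegral hk).tower_top, ← cyclotomic_eq_minpoly_rat hμ hk,
    natDegree_cyclotomic]

theorem natDegree_minpoly_adjoin_pow_mul_totient {ζ : L} {s k t : ℕ}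
    (hζ : IsPrimitiveRoot ζ (s * k)) (hsk : 0 < s * k) (hst : s.Coprime t) :
    (minpoly ℚ⟮ζ ^ s⟯ (ζ ^ t)).natDegree * k.totient = (s * k).totient := by
  have hk : 0 < k := Nat.pos_of_mul_pos_left hsk
  have hint : IsIntegral ℚ⟮ζ ^ s⟯ (ζ ^ t) := ((hζ.isIntegral hsk).pow t).tower_top
  have htop : (ℚ⟮ζ ^ s⟯⟮ζ ^ t⟯).restrictScalars ℚ = ℚ⟮ζ⟯ := by
    refine (adjoin_simple_adjoin_simple ..).trans ?_
    refine le_antisymm (adjoin_le_iff.2 ?_) (adjoin_simple_le_iff.2 ?_)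
    · rintro _ (rfl | rfl) <;> exact pow_mem (mem_adjoin_simple_self ℚ ζ) _
    · exact mem_adjoin_pow_pow (hζ.ne_zero hsk.ne') hst
  rw [← adjoin.finrank hint, ← (hζ.pow hsk rfl).finrank_rat_adjoin hk, mul_comm,
    finrank_mul_finrank, ← hζ.finrank_rat_adjoin hsk, ← htop]
  rfl

end IsPrimitiveRoot

theorem Multiset.exists_sum_filter_eq_mul_pow {F L : Type*} [Field F] [Field L] [Algebra F L]
    {W : Multiset L} {p k : ℕ} {x ε : L} (hp : 0 < p) (hk : 0 < k)
    (hx : IsPrimitiveRoot (x ^ k) p) (hε : IsPrimitiveRoot ε k)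
    (hpow : ∀ w ∈ W, w ^ (p * k) = 1) :
    ∃ (cls : L → ℕ) (S : ℕ → L), (∀ w ∈ W, cls w < p ∧ w ^ k = (x ^ k) ^ cls w) ∧
      (∀ c, S c ∈ F⟮ε⟯) ∧ (∀ c, (W.filter (cls · = c)).sum = S c * x ^ c) ∧
      ∑ c ∈ Finset.range p, S c * x ^ c = W.sum := by
  have : NeZero p := ⟨hp.ne'⟩
  have hx0 : x ≠ 0 := fun h => hx.ne_zero hp.ne' (by rw [h, zero_pow hk.ne'])
  have hcls : ∀ w ∈ W, ∃ c < p, (x ^ k) ^ c = w ^ k := fun w hw =>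
    hx.eq_pow_of_pow_eq_one (by rw [← pow_mul, mul_comm, hpow w hw])
  choose! cls hlt hcls using hcls
  set S : ℕ → L := fun c => (W.filter (cls · = c)).sum * (x ^ c)⁻¹
  have hS : ∀ c, (W.filter (cls · = c)).sum = S c * x ^ c := fun c =>
    (inv_mul_cancel_right₀ (pow_ne_zero c hx0) _).symm
  refine ⟨cls, S, fun w hw => ⟨hlt w hw, (hcls w hw).symm⟩, fun c => ?_, hS, ?_⟩
  · change (W.filter (cls · = c)).sum * (x ^ c)⁻¹ ∈ F⟮ε⟯
    rw [← map_id' (W.filter _), ← sum_map_mul_right]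
    refine multiset_sum_mem _ fun y hy => ?_
    obtain ⟨w, hw, rfl⟩ := mem_map.1 hy
    obtain ⟨hwW, rfl⟩ := mem_filter.1 hw
    refine hε.mem_adjoin_of_pow_eq_one hk ?_
    rw [mul_pow, inv_pow, ← pow_mul, mul_comm (cls w) k, pow_mul, hcls w hwW,
      mul_inv_cancel₀ (hcls w hwW ▸ pow_ne_zero _ (pow_ne_zero _ hx0))]
  · simp only [← hS]
    exact sum_fiberwise_of_maps_to fun w hw => Finset.mem_range.2 (hlt w hw)

def IsMinimalVanishing {M : Type*} [AddCommMonoid M] (W : Multiset M) : Prop :=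
  W.sum = 0 ∧ ∀ T ≤ W, T ≠ 0 → T ≠ W → T.sum ≠ 0

namespace IsMinimalVanishing

section AddCommMonoid

variable {M N : Type*} [AddCommMonoid M] [AddCommMonoid N] {W : Multiset M}

theorem of_map {f : M →+ N} (hf : Function.Injective f) (h : IsMinimalVanishing (W.map f)) :
    IsMinimalVanishing W := by
  refine ⟨(map_eq_zero_iff f hf).1 (by rw [map_multiset_sum, h.1]),
    fun T hT hT0 hTW hsum => h.2 (T.map f) (Multiset.map_le_map hT) (by simpa using hT0)
      ((Multiset.map_injective hf).ne hTW) (by rw [← map_multiset_sum, hsum, map_zero])⟩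

theorem forall_of_sum_filter_eq_zero (hW : IsMinimalVanishing W) {q : M → Prop}
    [DecidablePred q] {a : M} (ha : a ∈ W) (hqa : q a) (h : (W.filter q).sum = 0) :
    ∀ w ∈ W, q w := by
  refine Multiset.filter_eq_self.1 (not_not.1 fun hne => hW.2 _ (W.filter_le q) ?_ hne h)
  exact Multiset.card_pos.1
    (Multiset.card_pos_iff_exists_mem.2 ⟨a, Multiset.mem_filter.2 ⟨ha, hqa⟩⟩)

end AddCommMonoid

theorem pow_eq_one_of_sum_filter_eq_zero {L : Type*} [CommRing L] {W : Multiset L}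
    (hW : IsMinimalVanishing W) (h1 : 1 ∈ W) {y : L} {p k : ℕ} (hy : IsPrimitiveRoot y p)
    {cls : L → ℕ} (hcls : ∀ w ∈ W, cls w < p ∧ w ^ k = y ^ cls w)
    (hzero : ∀ c < p, (W.filter (cls · = c)).sum = 0) : ∀ w ∈ W, w ^ k = 1 := by
  obtain ⟨hlt1, hpow1⟩ := hcls 1 h1
  have hcls1 : cls 1 = 0 :=
    Nat.eq_zero_of_dvd_of_lt ((hy.pow_eq_one_iff_dvd _).1 (by rw [← hpow1, one_pow])) hlt1
  intro w hw
  rw [(hcls w hw).2, hW.forall_of_sum_filter_eq_zero h1 hcls1 (hzero 0 (hcls1 ▸ hlt1)) w hw,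
    pow_zero]

variable {W : Multiset ℂ} {p k : ℕ}

theorem pow_eq_one_of_prime_dvd (hW : IsMinimalVanishing W) (h1 : 1 ∈ W) (hp : p.Prime)
    (hk : 0 < k) (hpk : p ∣ k) (hpow : ∀ w ∈ W, w ^ (p * k) = 1) : ∀ w ∈ W, w ^ k = 1 := by
  have hpk0 : 0 < p * k := Nat.mul_pos hp.pos hk
  have hζ := Complex.isPrimitiveRoot_exp (p * k) hpk0.ne'
  set ζ := Complex.exp (2 * Real.pi * Complex.I / ↑(p * k))
  have hdeg : (minpoly ℚ⟮ζ ^ p⟯ ζ).natDegree = p := by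
    have := hζ.natDegree_minpoly_adjoin_pow_mul_totient hpk0 (Nat.coprime_one_right p)
    rw [pow_one, Nat.totient_mul_of_prime_of_dvd hp hpk] at this
    exact Nat.eq_of_mul_eq_mul_right (Nat.totient_pos.2 hk) this
  have hx : IsPrimitiveRoot (ζ ^ k) p := hζ.pow hpk0 (mul_comm p k)
  obtain ⟨cls, S, hcls, hSK, hS, hsum⟩ :=
    W.exists_sum_filter_eq_mul_pow (F := ℚ) hp.pos hk hx (hζ.pow hpk0 rfl) hpow
  have hsum' : ∑ c ∈ Finset.range (minpoly ℚ⟮ζ ^ p⟯ ζ).natDegree, S c * ζ ^ c = 0 := by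
    rw [hdeg, hsum, hW.1]
  refine hW.pow_eq_one_of_sum_filter_eq_zero h1 hx hcls fun c hc => ?_
  rw [hS, eq_zero_of_sum_mul_pow_eq_zero hSK hsum' c (by rwa [hdeg]), zero_mul]

theorem pow_eq_one_of_card_lt_prime (hW : IsMinimalVanishing W) (h1 : 1 ∈ W) (hp : p.Prime)
    (hk : 0 < k) (hpk : ¬ p ∣ k) (hcard : Multiset.card W < p)
    (hpow : ∀ w ∈ W, w ^ (p * k) = 1) : ∀ w ∈ W, w ^ k = 1 := by
  have hpk0 : 0 < p * k := Nat.mul_pos hp.pos hk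
  have hζ := Complex.isPrimitiveRoot_exp (p * k) hpk0.ne'
  set ζ := Complex.exp (2 * Real.pi * Complex.I / ↑(p * k))
  have hcop : p.Coprime k := (Nat.Prime.coprime_iff_not_dvd hp).2 hpk
  have hdeg : (minpoly ℚ⟮ζ ^ p⟯ (ζ ^ k)).natDegree = p - 1 := by
    have := hζ.natDegree_minpoly_adjoin_pow_mul_totient hpk0 hcop
    rw [Nat.totient_mul hcop, Nat.totient_prime hp] at this
    exact Nat.eq_of_mul_eq_mul_right (Nat.totient_pos.2 hk) this
  have hx : IsPrimitiveRoot (ζ ^ k) p := hζ.pow hpk0 (mul_comm p k)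
  have hy : IsPrimitiveRoot ((ζ ^ k) ^ k) p := hx.pow_of_coprime k hcop.symm
  obtain ⟨cls, S, hcls, hSK, hS, hsum⟩ :=
    W.exists_sum_filter_eq_mul_pow (F := ℚ) hp.pos hk hy (hζ.pow hpk0 rfl) hpow
  rw [hW.1] at hsum
  have hSeq := eq_of_sum_mul_pow_eq_zero hx hp.one_lt hdeg hSK hsum
  obtain ⟨c₀, hc₀, hempty⟩ : ∃ c₀ ∈ Finset.range p, c₀ ∉ (W.map cls).toFinset :=
    Finset.exists_mem_notMem_of_card_lt_card <| ((Multiset.toFinset_card_le _).trans_lt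
      (by rwa [Multiset.card_map])).trans_eq (Finset.card_range p).symm
  have hS₀ : S c₀ = 0 := by
    have hfilter : W.filter (cls · = c₀) = 0 := Multiset.filter_eq_nil.2 fun w hw hwc =>
      hempty (Multiset.mem_toFinset.2 (hwc ▸ Multiset.mem_map_of_mem cls hw))
    have := hS c₀
    rw [hfilter, Multiset.sum_zero, eq_comm, mul_eq_zero] at this
    exact this.resolve_right (pow_ne_zero _ (hx.ne_zero hp.ne_zero))
  refine hW.pow_eq_one_of_sum_filter_eq_zero h1 hy hcls fun c hc => ?_
  rw [hS, hSeq c hc, ← hSeq c₀ (Finset.mem_range.1 hc₀), hS₀, zero_mul]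

theorem pow_primorial_card_eq_one (hW : IsMinimalVanishing W) (h1 : 1 ∈ W) {n : ℕ}
    (hn : 0 < n) (hpow : ∀ w ∈ W, w ^ n = 1) :
    ∀ w ∈ W, w ^ primorial (Multiset.card W) = 1 := by
  induction n using Nat.strong_induction_on with
  | _ n ih =>
    by_cases hdvd : n ∣ primorial (Multiset.card W)
    · obtain ⟨c, hc⟩ := hdvd
      intro w hw
      rw [hc, pow_mul, hpow w hw, one_pow]
    obtain ⟨p, k, hp, rfl, hpk⟩ := Nat.exists_prime_mul_of_not_dvd_primorial hdvd
    have hk : 0 < k := Nat.pos_of_mul_pos_left hn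
    refine ih k (lt_mul_left hk hp.one_lt) hk ?_
    by_cases hdvd : p ∣ k
    · exact hW.pow_eq_one_of_prime_dvd h1 hp hk hdvd hpow
    · exact hW.pow_eq_one_of_card_lt_prime h1 hp hk hdvd (hpk.resolve_left hdvd) hpow

end IsMinimalVanishing

theorem minimalVanishingSums_subset_setOf_mem_image_nthRootsFinset (ζ : ℂ) (ℓ : ℕ) :
    minimalVanishingSums ζ ℓ ⊆ {M | Multiset.card M = ℓ ∧
      ∀ z ∈ M, z ∈ (nthRootsFinset (primorial ℓ) (1 : ℂ)).image (ζ * ·)} := by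
  rintro M ⟨hcard, hζM, hroots, hsum, hmin⟩
  refine ⟨hcard, fun z hz => ?_⟩
  obtain ⟨n, hn, hpow⟩ := Multiset.exists_pow_eq_one fun z hz =>
    isOfFinOrder_iff_pow_eq_one.2 (hroots z hz)
  have hζ0 : ζ ≠ 0 := fun h => by simpa [h, zero_pow hn.ne'] using hpow ζ hζM
  have hW : IsMinimalVanishing (M.map (· * ζ⁻¹)) := by
    refine IsMinimalVanishing.of_map (f := AddMonoidHom.mulRight ζ) (mul_left_injective₀ hζ0) ?_
    simpa [Multiset.map_map, Function.comp_def, hζ0] using ⟨hsum, hmin⟩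
  have h1 : (1 : ℂ) ∈ M.map (· * ζ⁻¹) := Multiset.mem_map.2 ⟨ζ, hζM, mul_inv_cancel₀ hζ0⟩
  have hpow' : ∀ w ∈ M.map (· * ζ⁻¹), w ^ n = 1 := by
    intro w hw
    obtain ⟨y, hy, rfl⟩ := Multiset.mem_map.1 hw
    rw [mul_pow, inv_pow, hpow y hy, hpow ζ hζM, inv_one, mul_one]
  have hz' := hW.pow_primorial_card_eq_one h1 hn hpow' _ (Multiset.mem_map_of_mem _ hz)
  rw [Multiset.card_map, hcard] at hz'
  exact Finset.mem_image.2 ⟨_, (mem_nthRootsFinset (primorial_pos ℓ) 1).2 hz', by field_simp⟩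

theorem minimalVanishingSums_finite_and_card_bound_general (ζ : ℂ) (ℓ : ℕ) :
    (minimalVanishingSums ζ ℓ).Finite ∧
    Nat.card (minimalVanishingSums ζ ℓ) ≤ ℓ ^ (3 * ℓ ^ 2) := by
  set T := (nthRootsFinset (primorial ℓ) (1 : ℂ)).image (ζ * ·)
  have hsub := minimalVanishingSums_subset_setOf_mem_image_nthRootsFinset ζ ℓ
  obtain ⟨hfin, hcard⟩ := T.finite_setOf_multiset_card_eq ℓ
  have hT : T.card ≤ ℓ ^ ℓ := calc
    T.card ≤ (nthRootsFinset (primorial ℓ) (1 : ℂ)).card := Finset.card_image_le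
    _ = primorial ℓ := (Complex.isPrimitiveRoot_exp _ (primorial_ne_zero ℓ)).card_nthRootsFinset
    _ ≤ ℓ ^ ℓ := primorial_le_pow_self ℓ
  refine ⟨hfin.subset hsub, ?_⟩
  rw [Nat.card_coe_set_eq]
  calc (minimalVanishingSums ζ ℓ).ncard ≤ T.card ^ ℓ := (Set.ncard_le_ncard hsub hfin).trans hcard
    _ ≤ ℓ ^ (ℓ * ℓ) := by rw [pow_mul]; exact Nat.pow_le_pow_left hT ℓ
    _ ≤ ℓ ^ (3 * ℓ ^ 2) := by
      rcases ℓ.eq_zero_or_pos with rfl | hℓ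
      · rfl
      exact Nat.pow_le_pow_right hℓ (by nlinarith)

theorem minimalVanishingSums_finite_and_card_bound (ζ : ℂ)
    (hζ : ∃ n : ℕ, 0 < n ∧ ζ ^ n = 1) (ℓ : ℕ) (hℓ : 1 ≤ ℓ) :
    (minimalVanishingSums ζ ℓ).Finite ∧
    Nat.card (minimalVanishingSums ζ ℓ) ≤ ℓ ^ (3 * ℓ ^ 2) :=
  minimalVanishingSums_finite_and_card_bound_general ζ ℓ
end

section
/- Let p be an odd prime, let N ≥ 3 be an integer divisible by p, let k ≥ 1 be an integer, and set d = k·p. Then the multiplicity of the eigenvalue 0 of the discrete torus T^d_N satisfies m_{T^d_N}(0) ≥ (N/p)^k. (This shows the exponent d/p_1 in the general multiplicity upper bound C·N^{d/p_1} is optimal.) -/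
lemma sum_cos_aux (p : ℕ) (hp : 2 ≤ p) (θ : ℝ) :
    ∑ c : Fin p, Real.cos (θ + 2 * Real.pi * c / p) = 0 := by
  have hζ : IsPrimitiveRoot (Complex.exp (2 * Real.pi * Complex.I / p)) p :=
    Complex.isPrimitiveRoot_exp p (by omega)
  have hz : ∑ c ∈ Finset.range p, Complex.exp (2 * Real.pi * Complex.I / p) ^ c = 0 :=
    hζ.geom_sum_eq_zero (by omega)
  have key : ∑ c : Fin p, Complex.exp ((θ + 2 * Real.pi * c / p : ℝ) * Complex.I) = 0 := by
    have : ∀ c : Fin p, Complex.exp ((θ + 2 * Real.pi * c / p : ℝ) * Complex.I)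
        = Complex.exp (θ * Complex.I) * Complex.exp (2 * Real.pi * Complex.I / p) ^ (c : ℕ) := by
      intro c
      rw [← Complex.exp_nat_mul, ← Complex.exp_add]
      congr 1
      push_cast
      have hp0 : (p : ℂ) ≠ 0 := by exact_mod_cast (by omega : p ≠ 0)
      field_simp
    simp only [this, ← Finset.mul_sum]
    rw [Fin.sum_univ_eq_sum_range (fun c => Complex.exp (2 * Real.pi * Complex.I / p) ^ c), hz,
      mul_zero]
  have h2 := congrArg Complex.re key
  rw [Complex.re_sum] at h2
  simp only [Complex.exp_ofReal_mul_I_re] at h2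
  simpa using h2

theorem zero_mult_lower_bound_optimal (p N k : ℕ) (hp : p.Prime) (hpo : Odd p)
    (hN : 3 ≤ N) (hpN : p ∣ N) (hk : 1 ≤ k) :
    (N / p) ^ k ≤ torusMult N (k * p) 0 := by
  set m := N / p with hm
  have hpm : p * m = N := Nat.mul_div_cancel' hpN
  have hp2 : 2 ≤ p := hp.two_le
  have hm1 : 1 ≤ m := by
    rcases Nat.eq_zero_or_pos m with h | h
    · rw [h, Nat.mul_zero] at hpm; omega
    · exact h
  have hN0 : (N : ℝ) ≠ 0 := by exact_mod_cast (by omega : N ≠ 0)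
  have hp0 : (p : ℝ) ≠ 0 := by exact_mod_cast (by omega : p ≠ 0)
  -- the map
  have hval : ∀ (a : Fin k → Fin m) (i : Fin (k * p)),
      (a (finProdFinEquiv.symm i).1 : ℕ) + ((finProdFinEquiv.symm i).2 : ℕ) * m < N := by
    intro a i
    have h1 : (a (finProdFinEquiv.symm i).1 : ℕ) < m := (a _).isLt
    have h2 : ((finProdFinEquiv.symm i).2 : ℕ) < p := ((finProdFinEquiv.symm i).2).isLt
    have h3 : ((finProdFinEquiv.symm i).2 : ℕ) * m ≤ (p - 1) * m :=
      Nat.mul_le_mul_right m (by omega)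
    have h5 : m ≤ p * m := Nat.le_mul_of_pos_left m (by omega)
    have h4 : (p - 1) * m + m = p * m := by rw [Nat.sub_one_mul]; omega
    omega
  let g : (Fin k → Fin m) → (Fin (k * p) → Fin N) := fun a i =>
    ⟨(a (finProdFinEquiv.symm i).1 : ℕ) + ((finProdFinEquiv.symm i).2 : ℕ) * m, hval a i⟩
  have hsum : ∀ a : Fin k → Fin m,
      (∑ j, 2 * Real.cos (2 * Real.pi * ((g a j : Fin N) : ℝ) / N)) = 0 := by
    intro a
    rw [← Equiv.sum_comp (finProdFinEquiv : Fin k × Fin p ≃ Fin (k * p))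
      (fun j => 2 * Real.cos (2 * Real.pi * ((g a j : Fin N) : ℝ) / N))]
    rw [Fintype.sum_prod_type]
    have : ∀ (b : Fin k) (c : Fin p),
        2 * Real.cos (2 * Real.pi * ((g a (finProdFinEquiv (b, c)) : Fin N) : ℝ) / N)
        = 2 * Real.cos ((2 * Real.pi * (a b : ℕ) / N) + 2 * Real.pi * c / p) := by
      intro b c
      congr 1
      congr 1
      show 2 * Real.pi * (((a (finProdFinEquiv.symm (finProdFinEquiv (b, c))).1 : ℕ)
        + ((finProdFinEquiv.symm (finProdFinEquiv (b, c))).2 : ℕ) * m : ℕ) : ℝ) / N = _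
      rw [Equiv.symm_apply_apply]
      have hpmR : (p : ℝ) * m = N := by exact_mod_cast hpm
      push_cast
      rw [← hpmR]
      have hm0 : (m : ℝ) ≠ 0 := by exact_mod_cast (by omega : m ≠ 0)
      field_simp
    simp only [this]
    refine Finset.sum_eq_zero fun b _ => ?_
    rw [← Finset.mul_sum, sum_cos_aux p hp2, mul_zero]
  have hinj : Function.Injective g := by
    intro a a' h
    funext b
    have := congrFun h (finProdFinEquiv (b, ⟨0, by omega⟩))
    have hv := congrArg Fin.val this
    simp only [g, Equiv.symm_apply_apply] at hv
    exact Fin.ext (by simpa using hv)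
  let G : (Fin k → Fin m) → {v : Fin (k * p) → Fin N //
      (∑ j, 2 * Real.cos (2 * Real.pi * ((v j : Fin N) : ℝ) / N)) = 0} :=
    fun a => ⟨g a, hsum a⟩
  have hGinj : Function.Injective G := fun a a' h => hinj (congrArg Subtype.val h)
  have := Nat.card_le_card_of_injective G hGinj
  calc m ^ k = Nat.card (Fin k → Fin m) := by simp
    _ ≤ _ := this
end
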